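/- arXiv:2101.06659 — 2 statements merged into one kernel-verified Lean document; each statement's English description precedes it below -/
import Mathlib

section
/- Let X be a Banach space and g ∈ L^∞_{w*}(ℝ, X*) (weak-* measurable with ess sup ‖g‖ < ∞). Suppose that sup_{h ∈ B_{L¹(ℝ,X)}} |∫ ⟨g(ω+t) − g(ω), h(ω)⟩ dω| → 0 as t → 0 (i.e., g belongs to the sun-dual of the translation semigroup on L¹(ℝ, X)). Then for every z ∈ X, the scalar function ω ↦ ⟨g(ω), z⟩ agrees a.e. with a bounded uniformly continuous function on ℝ. -/
/-!
Testing the hypothesis against `φ • z` with `φ` in the unit ball of `L¹(ℝ)` shows, by the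
duality between `L¹` and `L^∞`, that `f = ⟨g(·), z⟩` satisfies `‖f(· + t) - f‖_∞ → 0` as `t → 0`.
Hence the averages `x ↦ ⨍ t in x..x + c, f t` are bounded, Lipschitz, and within `ε` of `f`
almost everywhere as soon as `c` is small. Continuous functions that are a.e. close are close
everywhere, so a sequence of such averages is uniformly Cauchy; its uniform limit is bounded,
uniformly continuous and equal to `f` almost everywhere.
-/

open MeasureTheory Filter

section Duality

variable {α : Type*} [MeasurableSpace α] {μ : Measure α} [SigmaFinite μ] {v : α → ℝ} {ε : ℝ}

theorem ae_le_of_forall_setIntegral_le_mul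
    (hv : ∀ s, MeasurableSet s → μ s < ⊤ → IntegrableOn v s μ)
    (h : ∀ s, MeasurableSet s → μ s < ⊤ → ∫ x in s, v x ∂μ ≤ ε * μ.real s) :
    ∀ᵐ x ∂μ, v x ≤ ε := by
  have hnonneg : ∀ᵐ x ∂μ, 0 ≤ ε - v x := by
    refine ae_nonneg_of_forall_setIntegral_nonneg_of_sigmaFinite
      (fun s hs hμs => (integrableOn_const hμs.ne).sub (hv s hs hμs)) fun s hs hμs => ?_
    rw [integral_sub (integrableOn_const (C := ε) hμs.ne) (hv s hs hμs), setIntegral_const,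
      smul_eq_mul, sub_nonneg, mul_comm]
    exact h s hs hμs
  filter_upwards [hnonneg] with x hx using sub_nonneg.1 hx

theorem ae_abs_le_of_forall_abs_setIntegral_le
    (hv : ∀ s, MeasurableSet s → μ s < ⊤ → IntegrableOn v s μ)
    (h : ∀ s, MeasurableSet s → μ s < ⊤ → |∫ x in s, v x ∂μ| ≤ ε * μ.real s) :
    ∀ᵐ x ∂μ, |v x| ≤ ε := by
  have hle := ae_le_of_forall_setIntegral_le_mul hv fun s hs hμs => (abs_le.1 (h s hs hμs)).2
  have hge := ae_le_of_forall_setIntegral_le_mul (v := fun x => -v x)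
    (fun s hs hμs => (hv s hs hμs).neg) fun s hs hμs => by
      rw [integral_neg]
      exact neg_le.1 (abs_le.1 (h s hs hμs)).1
  filter_upwards [hle, hge] with x hx hx' using abs_le.2 ⟨neg_le.1 hx', hx⟩

theorem ae_abs_le_of_forall_abs_integral_mul_le (hv : AEStronglyMeasurable v μ) {M : ℝ}
    (hM : ∀ᵐ x ∂μ, |v x| ≤ M)
    (h : ∀ φ : α → ℝ, Integrable φ μ → ∫ x, |φ x| ∂μ ≤ 1 → |∫ x, v x * φ x ∂μ| ≤ ε) :
    ∀ᵐ x ∂μ, |v x| ≤ ε := by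
  refine ae_abs_le_of_forall_abs_setIntegral_le (fun s _ hμs =>
    Measure.integrableOn_of_bounded hμs.ne hv (M := M)
      (ae_restrict_of_ae (by simpa only [Real.norm_eq_abs] using hM))) fun s hs hμs => ?_
  rcases (measureReal_nonneg (μ := μ) (s := s)).eq_or_lt with hzero | hpos
  · rw [← hzero, Measure.restrict_eq_zero.2 ((measureReal_eq_zero_iff hμs.ne).1 hzero.symm)]
    simp
  have hφ := h (s.indicator fun _ => (μ.real s)⁻¹)
    ((integrable_indicator_iff hs).2 (integrableOn_const hμs.ne))
  simp_rw [← Set.indicator_mul_right, ← Real.norm_eq_abs, norm_indicator_eq_indicator_norm,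
    integral_indicator hs, integral_mul_const, setIntegral_const] at hφ
  simpa [abs_of_pos hpos, hpos.ne', ← div_eq_mul_inv, div_le_iff₀ hpos] using hφ

end Duality

theorem Continuous.abs_le_of_ae_abs_le {α : Type*} [TopologicalSpace α] [MeasurableSpace α]
    {μ : Measure α} [μ.IsOpenPosMeasure] {v : α → ℝ} (hv : Continuous v) {c : ℝ}
    (h : ∀ᵐ x ∂μ, |v x| ≤ c) (x : α) : |v x| ≤ c := by
  have hclosed : IsClosed {x | |v x| ≤ c} := isClosed_le hv.abs continuous_const
  have huniv : {x | |v x| ≤ c} = Set.univ := by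
    rw [← hclosed.closure_eq, (Measure.dense_of_ae h).closure_eq]
  exact Set.eq_univ_iff_forall.1 huniv x

theorem exists_uniformContinuous_ae_eq_of_forall_approx {α : Type*} [UniformSpace α]
    [MeasurableSpace α] {μ : Measure α} [μ.IsOpenPosMeasure] {f : α → ℝ}
    (h : ∀ ε > 0, ∃ v : α → ℝ, UniformContinuous v ∧ (∃ K, ∀ x, |v x| ≤ K) ∧
      ∀ᵐ x ∂μ, |v x - f x| ≤ ε) :
    ∃ u : α → ℝ, UniformContinuous u ∧ (∃ K, ∀ x, |u x| ≤ K) ∧ ∀ᵐ x ∂μ, f x = u x := by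
  choose v hv_uc hv_bdd hv_approx using fun n : ℕ => h (1 / (n + 1)) Nat.one_div_pos_of_nat
  have hv_dist (n m : ℕ) (x : α) : dist (v n x) (v m x) ≤ 1 / (n + 1) + 1 / (m + 1) := by
    refine ((hv_uc n).continuous.sub (hv_uc m).continuous).abs_le_of_ae_abs_le (μ := μ) ?_ x
    filter_upwards [hv_approx n, hv_approx m] with y hn hm
    exact (abs_sub_le _ (f y) _).trans (add_le_add hn (abs_sub_comm (v m y) _ ▸ hm))
  have hv_cauchy : UniformCauchySeqOn v atTop Set.univ := by
    refine Metric.uniformCauchySeqOn_iff.2 fun ε hε => ?_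
    obtain ⟨N, hN⟩ := exists_nat_one_div_lt (half_pos hε)
    refine ⟨N, fun m hm n hn x _ => (hv_dist m n x).trans_lt ?_⟩
    linarith [Nat.one_div_le_one_div (α := ℝ) hm, Nat.one_div_le_one_div (α := ℝ) hn]
  choose u hu using fun x => cauchySeq_tendsto_of_complete (hv_cauchy.cauchySeq (Set.mem_univ x))
  have hv_unif : TendstoUniformly v u atTop :=
    tendstoUniformlyOn_univ.1 (hv_cauchy.tendstoUniformlyOn_of_tendsto fun x _ => hu x)
  refine ⟨u, hv_unif.uniformContinuous (Frequently.of_forall hv_uc), ?_, ?_⟩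
  · obtain ⟨N, hN⟩ := (Metric.tendstoUniformly_iff.1 hv_unif 1 one_pos).exists
    obtain ⟨K, hK⟩ := hv_bdd N
    refine ⟨K + 1, fun x => ?_⟩
    have := abs_sub_abs_le_abs_sub (u x) (v N x)
    linarith [hK x, (Real.dist_eq _ _ ▸ hN x : |u x - v N x| < 1)]
  · filter_upwards [ae_all_iff.2 hv_approx] with x hx
    refine tendsto_nhds_unique ?_ (hu x)
    refine tendsto_iff_dist_tendsto_zero.2 (squeeze_zero (fun _ => dist_nonneg) (fun n => ?_)
      tendsto_one_div_add_atTop_nhds_zero_nat)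
    exact (Real.dist_eq _ _).trans_le (hx n)

section IntervalAverage

variable {f : ℝ → ℝ} {M : ℝ}

theorem intervalIntegrable_of_ae_abs_le (hf : AEStronglyMeasurable f)
    (hM : ∀ᵐ x, |f x| ≤ M) (a b : ℝ) : IntervalIntegrable f volume a b :=
  have hOn : ∀ a b : ℝ, IntegrableOn f (Set.Ioc a b) :=
    fun a b => Measure.integrableOn_of_bounded measure_Ioc_lt_top.ne hf (M := M)
      (ae_restrict_of_ae (by simpa only [Real.norm_eq_abs] using hM))
  ⟨hOn a b, hOn b a⟩

theorem abs_intervalIntegral_le_of_ae_abs_le (hM : ∀ᵐ x, |f x| ≤ M) (a b : ℝ) :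
    |∫ t in a..b, f t| ≤ M * |b - a| :=
  Real.norm_eq_abs _ ▸
    intervalIntegral.norm_integral_le_of_norm_le_const_ae (hM.mono fun _ hx _ => hx)

theorem lipschitzWith_primitive_of_ae_abs_le (hf : AEStronglyMeasurable f)
    (hM : ∀ᵐ x, |f x| ≤ M) : LipschitzWith M.toNNReal fun x => ∫ t in (0 : ℝ)..x, f t := by
  refine LipschitzWith.of_dist_le_mul fun x y => ?_
  rw [Real.dist_eq, Real.dist_eq, intervalIntegral.integral_interval_sub_left
    (intervalIntegrable_of_ae_abs_le hf hM _ _) (intervalIntegrable_of_ae_abs_le hf hM _ _)]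
  exact (abs_intervalIntegral_le_of_ae_abs_le hM y x).trans
    (mul_le_mul_of_nonneg_right (Real.le_coe_toNNReal M) (abs_nonneg _))

theorem uniformContinuous_intervalAverage (hf : AEStronglyMeasurable f)
    (hM : ∀ᵐ x, |f x| ≤ M) (c : ℝ) : UniformContinuous fun x => ⨍ t in x..x + c, f t := by
  have hF := (lipschitzWith_primitive_of_ae_abs_le hf hM).uniformContinuous
  have hdiff : (fun x => ⨍ t in x..x + c, f t) =
      fun x => c⁻¹ • ((∫ t in (0 : ℝ)..x + c, f t) - ∫ t in (0 : ℝ)..x, f t) := by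
    funext x
    rw [interval_average_eq, add_sub_cancel_left, intervalIntegral.integral_interval_sub_left
      (intervalIntegrable_of_ae_abs_le hf hM _ _) (intervalIntegrable_of_ae_abs_le hf hM _ _)]
  rw [hdiff]
  exact ((hF.comp (uniformContinuous_id.add_const c)).sub hF).const_smul c⁻¹

theorem abs_intervalAverage_le (hM : ∀ᵐ x, |f x| ≤ M) {c : ℝ} (hc : c ≠ 0) (x : ℝ) :
    |⨍ t in x..x + c, f t| ≤ M := by
  rw [interval_average_eq_div, add_sub_cancel_left, abs_div,
    div_le_iff₀ (abs_pos.2 hc)]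
  simpa using abs_intervalIntegral_le_of_ae_abs_le hM x (x + c)

theorem ae_abs_intervalAverage_sub_le (hf : Measurable f) (hM : ∀ᵐ x, |f x| ≤ M) {c ε : ℝ}
    (hc : 0 < c) (htrans : ∀ t ∈ Set.Ioc 0 c, ∀ᵐ x, |f (x + t) - f x| ≤ ε) :
    ∀ᵐ x, |(⨍ t in x..x + c, f t) - f x| ≤ ε := by
  have hmeas : MeasurableSet {p : ℝ × ℝ | |f (p.2 + p.1) - f p.2| ≤ ε} :=
    measurableSet_le (by fun_prop) measurable_const
  have htrans_restrict : ∀ᵐ t ∂volume.restrict (Set.Ioc 0 c), ∀ᵐ x, |f (x + t) - f x| ≤ ε :=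
    (ae_restrict_iff' measurableSet_Ioc).2 (Eventually.of_forall htrans)
  filter_upwards [(Measure.ae_ae_comm hmeas).1 htrans_restrict] with x hx
  have hint : IntervalIntegrable (fun t => f (x + t)) volume 0 c := by
    simpa using
      (intervalIntegrable_of_ae_abs_le hf.aestronglyMeasurable hM x (x + c)).comp_add_left x
  have hsub : (⨍ t in x..x + c, f t) - f x = c⁻¹ * ∫ t in (0 : ℝ)..c, (f (x + t) - f x) := by
    rw [intervalIntegral.integral_sub hint intervalIntegrable_const,
      intervalIntegral.integral_comp_add_left, interval_average_eq, add_sub_cancel_left]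
    simp [field]
  have hbound : |∫ t in (0 : ℝ)..c, (f (x + t) - f x)| ≤ ε * c := by
    have := intervalIntegral.norm_integral_le_of_norm_le_const_ae (a := 0) (b := c)
      (C := ε) (f := fun t => f (x + t) - f x) ?_
    · simpa [abs_of_pos hc] using this
    · rw [Set.uIoc_of_le hc.le]
      filter_upwards [(ae_restrict_iff' measurableSet_Ioc).1 hx] with t ht ht'
      simpa [add_comm] using ht ht'
  rw [hsub, abs_mul, abs_inv, abs_of_pos hc, inv_mul_le_iff₀ hc]
  linarith

end IntervalAverage

theorem exists_uniformContinuous_ae_eq_of_ae_translate {f : ℝ → ℝ} (hf : Measurable f) {M : ℝ}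
    (hM : ∀ᵐ x, |f x| ≤ M)
    (htrans : ∀ ε > 0, ∃ δ > 0, ∀ t : ℝ, |t| < δ → ∀ᵐ x, |f (x + t) - f x| ≤ ε) :
    ∃ u : ℝ → ℝ, UniformContinuous u ∧ (∃ K, ∀ x, |u x| ≤ K) ∧ ∀ᵐ x, f x = u x := by
  refine exists_uniformContinuous_ae_eq_of_forall_approx fun ε hε => ?_
  obtain ⟨δ, hδ, hδtrans⟩ := htrans ε hε
  have hc : 0 < δ / 2 := half_pos hδ
  refine ⟨fun x => ⨍ t in x..x + δ / 2, f t,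
    uniformContinuous_intervalAverage hf.aestronglyMeasurable hM _,
    ⟨M, abs_intervalAverage_le hM hc.ne'⟩, ae_abs_intervalAverage_sub_le hf hM hc fun t ht => ?_⟩
  exact hδtrans t ((abs_of_pos ht.1).trans_lt (ht.2.trans_lt (half_lt_self hδ)))

section SunDual

variable {X : Type*} [NormedAddCommGroup X] [NormedSpace ℝ X] {g : ℝ → X →L[ℝ] ℝ} {C : ℝ}

theorem ae_abs_apply_le (hgbound : ∀ᵐ ω, ‖g ω‖ ≤ C) (z : X) : ∀ᵐ ω, |g ω z| ≤ C * ‖z‖ := by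
  filter_upwards [hgbound] with ω hω using (g ω).le_of_opNorm_le hω z

theorem ae_abs_apply_translate_sub_le (hgmeas : ∀ x : X, Measurable fun ω => g ω x)
    (hgbound : ∀ᵐ ω, ‖g ω‖ ≤ C)
    (hsun : ∀ ε > (0 : ℝ), ∃ δ > (0 : ℝ), ∀ t : ℝ, |t| < δ →
      ∀ h : ℝ → X, Integrable h volume → (∫ ω, ‖h ω‖) ≤ 1 →
        |∫ ω, (g (ω + t) (h ω) - g ω (h ω))| ≤ ε) (z : X) :
    ∀ ε > 0, ∃ δ > 0, ∀ t : ℝ, |t| < δ → ∀ᵐ ω, |g (ω + t) z - g ω z| ≤ ε := by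
  intro ε hε
  have hz : 0 < ‖z‖ + 1 := by positivity
  obtain ⟨δ, hδ, hsunδ⟩ := hsun (ε / (‖z‖ + 1)) (div_pos hε hz)
  refine ⟨δ, hδ, fun t ht => ?_⟩
  have hbound := ae_abs_apply_le hgbound z
  refine ae_abs_le_of_forall_abs_integral_mul_le (M := C * ‖z‖ + C * ‖z‖)
    (((hgmeas z).comp (measurable_add_const t)).sub (hgmeas z)).aestronglyMeasurable ?_
    fun φ hφ hφ_norm => ?_
  · filter_upwards [(measurePreserving_add_right volume t).quasiMeasurePreserving.ae hbound,
      hbound] with ω h1 h2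
    exact (abs_sub _ _).trans (add_le_add h1 h2)
  -- test the hypothesis against `φ • w`, where `w` is `z` rescaled into the unit ball
  set w := (‖z‖ + 1)⁻¹ • z
  have hw : ‖w‖ ≤ 1 := by
    rw [norm_smul, norm_inv, Real.norm_of_nonneg hz.le, inv_mul_le_one₀ hz]
    linarith
  have hφw : ∫ ω, ‖φ ω • w‖ ≤ 1 := by
    simp_rw [norm_smul, integral_mul_const, Real.norm_eq_abs]
    exact mul_le_one₀ hφ_norm (norm_nonneg w) hw
  have hpair : (fun ω => g (ω + t) (φ ω • w) - g ω (φ ω • w)) =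
      fun ω => (‖z‖ + 1)⁻¹ * ((g (ω + t) z - g ω z) * φ ω) := by
    funext ω
    simp only [w, map_smul, smul_eq_mul]
    ring
  have hsun_w := hsunδ t ht (fun ω => φ ω • w) (hφ.smul_const w) hφw
  rw [hpair, integral_const_mul, abs_mul, abs_inv, abs_of_pos hz, inv_mul_le_iff₀ hz,
    mul_div_cancel₀ _ hz.ne'] at hsun_w
  exact hsun_w

end SunDual

theorem stmt13 {X : Type*} [NormedAddCommGroup X] [NormedSpace ℝ X]
    (g : ℝ → (X →L[ℝ] ℝ)) (C : ℝ)
    (hgmeas : ∀ x : X, Measurable fun ω => g ω x)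
    (hgbound : ∀ᵐ ω ∂(volume : Measure ℝ), ‖g ω‖ ≤ C)
    (hsun : ∀ ε > (0 : ℝ), ∃ δ > (0 : ℝ), ∀ t : ℝ, |t| < δ →
      ∀ h : ℝ → X, Integrable h volume → (∫ ω, ‖h ω‖) ≤ 1 →
        |∫ ω, (g (ω + t) (h ω) - g ω (h ω))| ≤ ε) :
    ∀ z : X, ∃ u : ℝ → ℝ, UniformContinuous u ∧ (∃ K, ∀ ω, |u ω| ≤ K) ∧
      ∀ᵐ ω ∂(volume : Measure ℝ), g ω z = u ω := fun z =>
  exists_uniformContinuous_ae_eq_of_ae_translate (hgmeas z) (ae_abs_apply_le hgbound z)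
    (ae_abs_apply_translate_sub_le hgmeas hgbound hsun z)
end

section
/- Let X be a Banach space and g: ℝ → X* a bounded function such that for every null sequence (t_n) one has sup_{z ∈ B_X} sup_{h ∈ B_{L¹(ℝ)}} ∫ |⟨g(ω + t_n) − g(ω), z⟩| h(ω) dω → 0 and moreover sup_{h ∈ B_{L¹(ℝ,X)}} ∫ |⟨g(ω + t_n), h(ω)⟩ − ⟨g(ω), h(ω)⟩| dω → 0. If additionally ω ↦ ⟨g(ω), z⟩ is continuous for each z ∈ X, then g: ℝ → X* is norm continuous. -/
/-!
Testing the dual-valued function `F ω = g (ω + t) - g ω` against `h = (μ U)⁻¹ 𝟙_U • z` for unit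
vectors `z` and small open sets `U ∋ ω₀` turns the bound on `∫ |⟨F ω, h ω⟩| dω` into a bound on
the averages of the continuous function `|⟨F ·, z⟩|` near `ω₀`, hence on `|⟨F ω₀, z⟩|` and on
`‖F ω₀‖`. So `‖g (ω₀ + tₙ) - g ω₀‖` tends to `0` along every null sequence `tₙ`.
-/

open MeasureTheory Filter Topology

section

variable {Ω : Type*} [TopologicalSpace Ω] [LocallyCompactSpace Ω] [MeasurableSpace Ω]
  [OpensMeasurableSpace Ω] {μ : Measure Ω} [μ.IsOpenPosMeasure] [IsFiniteMeasureOnCompacts μ]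

theorem le_of_forall_setAverage_le {f : Ω → ℝ} (hf : Continuous f) {M : ℝ}
    (hM : ∀ U, IsOpen U → μ U ≠ 0 → μ U ≠ ⊤ → ⨍ ω in U, f ω ∂μ ≤ M) (x : Ω) : f x ≤ M := by
  by_contra! hx
  obtain ⟨K, hK, hxK, hKf⟩ := exists_compact_subset (isOpen_lt continuous_const hf) hx
  have hU₀ : μ (interior K) ≠ 0 := isOpen_interior.measure_ne_zero μ ⟨x, hxK⟩
  have hU₁ : μ (interior K) ≠ ⊤ := measure_ne_top_of_subset interior_subset hK.measure_ne_top
  obtain ⟨y, hyU, hfy⟩ := exists_le_setAverage hU₀ hU₁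
    (hf.continuousOn.integrableOn_of_subset_isCompact hK isOpen_interior.measurableSet
      interior_subset hU₁)
  exact (hfy.trans (hM _ isOpen_interior hU₀ hU₁)).not_gt (hKf (interior_subset hyU))

theorem opNorm_le_of_forall_integral_abs_apply_le {X : Type*} [NormedAddCommGroup X]
    [NormedSpace ℝ X] {F : Ω → X →L[ℝ] ℝ} (hF : ∀ z, Continuous fun ω => F ω z) {M : ℝ}
    (hM : ∀ h : Ω → X, Integrable h μ → ∫ ω, ‖h ω‖ ∂μ ≤ 1 → ∫ ω, |F ω (h ω)| ∂μ ≤ M) (x : Ω) :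
    ‖F x‖ ≤ M := by
  have hM₀ : 0 ≤ M := by simpa using hM 0 (integrable_zero _ _ _) (by simp)
  refine ContinuousLinearMap.opNorm_le_of_unit_norm hM₀ fun z hz => ?_
  refine le_of_forall_setAverage_le (μ := μ) (f := fun ω => |F ω z|) (continuous_abs.comp (hF z))
    (fun U hU hU₀ hU₁ => ?_) x
  set h : Ω → X := U.indicator fun _ => (μ.real U)⁻¹ • z
  have hint : Integrable h μ :=
    (integrable_indicator_iff hU.measurableSet).2 (integrableOn_const hU₁)
  have hnorm : ∫ ω, ‖h ω‖ ∂μ = 1 := by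
    simp_rw [h, norm_indicator_eq_indicator_norm]
    rw [integral_indicator_const _ hU.measurableSet, norm_smul, hz, mul_one, norm_inv,
      Real.norm_of_nonneg measureReal_nonneg, smul_eq_mul,
      mul_inv_cancel₀ ((measureReal_ne_zero_iff hU₁).2 hU₀)]
  have hFh : (fun ω => |F ω (h ω)|) = U.indicator fun ω => (μ.real U)⁻¹ * |F ω z| := by
    ext ω
    by_cases hω : ω ∈ U <;> simp [h, hω, abs_mul]
  calc ⨍ ω in U, |F ω z| ∂μ = ∫ ω, |F ω (h ω)| ∂μ := by
        rw [setAverage_eq, hFh, integral_indicator hU.measurableSet, integral_const_mul,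
          smul_eq_mul]
    _ ≤ M := hM h hint hnorm.le

end

theorem stmt14_general {X : Type*} [NormedAddCommGroup X] [NormedSpace ℝ X]
    (g : ℝ → (X →L[ℝ] ℝ))
    (h2 : ∀ t : ℕ → ℝ, Tendsto t atTop (nhds 0) →
      ∀ ε > (0 : ℝ), ∃ N : ℕ, ∀ n ≥ N,
        ∀ h : ℝ → X, Integrable h volume → (∫ ω, ‖h ω‖) ≤ 1 →
          (∫ ω, |g (ω + t n) (h ω) - g ω (h ω)|) ≤ ε)
    (hcont : ∀ z : X, Continuous fun ω => g ω z) :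
    Continuous g := by
  refine continuous_iff_continuousAt.2 fun t₀ => tendsto_nhds_iff_seq_tendsto.2 fun s hs => ?_
  have hshift : Tendsto (fun n => s n - t₀) atTop (𝓝 0) := by simpa using hs.sub_const t₀
  refine Metric.tendsto_atTop.2 fun ε hε => ?_
  obtain ⟨N, hN⟩ := h2 _ hshift (ε / 2) (half_pos hε)
  refine ⟨N, fun n hn => ?_⟩
  have hnorm : ‖g (t₀ + (s n - t₀)) - g t₀‖ ≤ ε / 2 :=
    opNorm_le_of_forall_integral_abs_apply_le (F := fun ω => g (ω + (s n - t₀)) - g ω)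
      (fun z => ((hcont z).comp (continuous_add_const _)).sub (hcont z)) (hN n hn) t₀
  rw [add_sub_cancel] at hnorm
  rw [Function.comp_apply, dist_eq_norm]
  linarith

theorem stmt14 {X : Type*} [NormedAddCommGroup X] [NormedSpace ℝ X]
    (g : ℝ → (X →L[ℝ] ℝ)) (C : ℝ) (hgbound : ∀ t, ‖g t‖ ≤ C)
    (h1 : ∀ t : ℕ → ℝ, Tendsto t atTop (nhds 0) →
      ∀ ε > (0 : ℝ), ∃ N : ℕ, ∀ n ≥ N, ∀ z : X, ‖z‖ ≤ 1 →
        ∀ h : ℝ → ℝ, Integrable h volume → (∫ ω, |h ω|) ≤ 1 →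
          (∫ ω, |g (ω + t n) z - g ω z| * |h ω|) ≤ ε)
    (h2 : ∀ t : ℕ → ℝ, Tendsto t atTop (nhds 0) →
      ∀ ε > (0 : ℝ), ∃ N : ℕ, ∀ n ≥ N,
        ∀ h : ℝ → X, Integrable h volume → (∫ ω, ‖h ω‖) ≤ 1 →
          (∫ ω, |g (ω + t n) (h ω) - g ω (h ω)|) ≤ ε)
    (hcont : ∀ z : X, Continuous fun ω => g ω z) :
    Continuous g :=
  stmt14_general g h2 hcont
end
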